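/- For every ρ ∈ [0,1], every B ≥ 0, every expert strategy x^π with x^π_v ∈ U for each v, and every sequence of RL suggestions x̃_1, …, x̃_T with x̃_v ∈ U ∪ {skip}, the strategy x produced by LOMAR's free-disposal switching rule satisfies, at every step v ∈ {0, 1, …, T}, the invariant R_v ≥ ρ·( R^π_v + G̃((V_{u,v})_{u∈U}, (V^π_{u,v})_{u∈U}) ) − B. -/

import Mathlib

/-- `Vset x u v` = `V_{u,v}`: the set of online items among steps `1, …, v`
that strategy `x` matches to offline item `u`. -/
def Vset {U : Type*} [DecidableEq U] (x : ℕ → Option U) (u : U) (v : ℕ) : Finset ℕ :=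
  (Finset.Icc 1 v).filter fun v' => x v' = some u

/-- `fRew cu wt S` = `f_u(S)`: the reward collected at an offline item of capacity `cu`
in the free-disposal model, i.e. the maximum over subsets `E ⊆ S` with `|E| ≤ cu` of
`Σ_{v'∈E} wt v'`. -/
noncomputable def fRew (cu : ℕ) (wt : ℕ → ℝ) (S : Finset ℕ) : ℝ :=
  sSup {x | ∃ E ⊆ S, E.card ≤ cu ∧ x = ∑ v' ∈ E, wt v'}

/-- `topList cu wt S`: the rewards of a maximum-reward subset of `S` of size `≤ cu`
(i.e. the top `cu` rewards), sorted increasingly and padded with zeros to length `cu`;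
its `j`-th entry (0-indexed) is `e_{u,j+1}(S)`. -/
noncomputable def topList (cu : ℕ) (wt : ℕ → ℝ) (S : Finset ℕ) : List ℝ :=
  let l := (S.val.map wt).sort (· ≤ ·)
  List.replicate (cu - l.length) 0 ++ l.drop (l.length - cu)

/-- The hedging term
`G̃((V_u),(V^π_u)) = Σ_{u∈U} ( max_{1≤i≤c(u)} Σ_{j=1}^{i} (e_{u,j}(V_u) − e_{u,j}(V^π_u)) )⁺`. -/
noncomputable def hedgeSum {U : Type*} [Fintype U] (c : U → ℕ) (w : U → ℕ → ℝ)
    (V Vπ : U → Finset ℕ) : ℝ :=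
  ∑ u : U, max (sSup ((fun i => ∑ j ∈ Finset.range i,
      ((topList (c u) (w u) (V u)).getD j 0 - (topList (c u) (w u) (Vπ u)).getD j 0)) ''
    Set.Icc 1 (c u))) 0

/-- `totalRew c w x v` = `R_v = Σ_{u∈U} f_u(V_{u,v})`: the cumulative reward of
strategy `x` after step `v` in the free-disposal model. -/
noncomputable def totalRew {U : Type*} [Fintype U] [DecidableEq U] (c : U → ℕ)
    (w : U → ℕ → ℝ) (x : ℕ → Option U) (v : ℕ) : ℝ :=
  ∑ u : U, fRew (c u) (w u) (Vset x u v)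

/-- LOMAR's free-disposal switching condition at step `v`: the RL suggestion `x̃_v`
may be followed iff `R_{v−1} + Δf_{x̃_v} ≥ ρ·(R^π_v + G_v) − B`, where `Δf_{x̃_v}` is
the marginal reward of the RL decision and `G_v` is the hedging term computed with
LOMAR's sets updated by the RL decision and the expert's sets after step `v`. -/
noncomputable def fdCond {U : Type*} [Fintype U] [DecidableEq U] (c : U → ℕ)
    (w : U → ℕ → ℝ) (ρ B : ℝ) (xπ : ℕ → U) (x xt : ℕ → Option U) (v : ℕ) : Prop :=
  totalRew c w x (v - 1) +
    ((xt v).elim (0 : ℝ) fun u =>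
      fRew (c u) (w u) (insert v (Vset x u (v - 1))) - fRew (c u) (w u) (Vset x u (v - 1))) ≥
  ρ * (totalRew c w (fun v' => some (xπ v')) v +
    hedgeSum c w
      (fun u => if xt v = some u then insert v (Vset x u (v - 1)) else Vset x u (v - 1))
      (fun u => Vset (fun v' => some (xπ v')) u v)) - B

/-!
Write `f_m(S)` for the best reward from at most `m` items of `S`. For nonnegative rewards the
increasingly sorted top-`c` list `e(S)` has prefix sums `Σ_{j ≤ i} e_j(S) = f_c(S) - f_{c-i}(S)`,
so with `φ(m) = f_m(V) - f_m(V^π)` the hedging term of an offline item is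
`φ(c) - min_{m ≤ c} φ(m)`. The recursion `f_m(S ∪ {v}) = max (f_m(S), w_v + f_{m-1}(S))` shows
that giving the same online item to LOMAR and to the expert never lowers `min φ`, so the hedging
term grows by at most LOMAR's marginal reward minus the expert's. The invariant follows by
induction on `v`: when the RL suggestion is followed, the switching condition is exactly the
invariant at step `v`; otherwise LOMAR copies the expert, and the right-hand side grows by at most
`ρ` times LOMAR's nonnegative gain.
-/

open Finset

section Reward

variable {m : ℕ} {wt : ℕ → ℝ} {S : Finset ℕ}

lemma fRew_set_finite (m : ℕ) (wt : ℕ → ℝ) (S : Finset ℕ) :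
    {x | ∃ E ⊆ S, E.card ≤ m ∧ x = ∑ v ∈ E, wt v}.Finite :=
  (S.powerset.finite_toSet.image fun E => ∑ v ∈ E, wt v).subset <| by
    rintro _ ⟨E, hE, -, rfl⟩
    exact ⟨E, mem_powerset.2 hE, rfl⟩

lemma sum_le_fRew {E : Finset ℕ} (hE : E ⊆ S) (hcard : E.card ≤ m) :
    ∑ v ∈ E, wt v ≤ fRew m wt S :=
  le_csSup (fRew_set_finite m wt S).bddAbove ⟨E, hE, hcard, rfl⟩

lemma exists_fRew_eq_sum (m : ℕ) (wt : ℕ → ℝ) (S : Finset ℕ) :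
    ∃ E ⊆ S, E.card ≤ m ∧ fRew m wt S = ∑ v ∈ E, wt v := by
  refine Set.Nonempty.csSup_mem ?_ (fRew_set_finite m wt S)
  exact ⟨0, ∅, empty_subset S, by simp⟩

lemma fRew_zero (wt : ℕ → ℝ) (S : Finset ℕ) : fRew 0 wt S = 0 := by
  obtain ⟨E, -, hE, h⟩ := exists_fRew_eq_sum 0 wt S
  rw [h, card_eq_zero.1 (Nat.le_zero.1 hE), sum_empty]

lemma fRew_empty (m : ℕ) (wt : ℕ → ℝ) : fRew m wt ∅ = 0 := by
  obtain ⟨E, hE, -, h⟩ := exists_fRew_eq_sum m wt ∅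
  rw [h, subset_empty.1 hE, sum_empty]

lemma fRew_mono {S' : Finset ℕ} (h : S ⊆ S') : fRew m wt S ≤ fRew m wt S' := by
  obtain ⟨E, hE, hcard, he⟩ := exists_fRew_eq_sum m wt S
  exact he ▸ sum_le_fRew (hE.trans h) hcard

lemma fRew_of_card_le (hw : 0 ≤ wt) (h : S.card ≤ m) : fRew m wt S = ∑ x ∈ S, wt x := by
  refine le_antisymm ?_ (sum_le_fRew subset_rfl h)
  obtain ⟨E, hE, -, he⟩ := exists_fRew_eq_sum m wt S
  exact he ▸ sum_le_sum_of_subset_of_nonneg hE fun x _ _ => hw x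

lemma fRew_insert {v : ℕ} (hv : v ∉ S) (hm : 1 ≤ m) :
    fRew m wt (insert v S) = max (fRew m wt S) (wt v + fRew (m - 1) wt S) := by
  apply le_antisymm
  · obtain ⟨E, hE, hcard, he⟩ := exists_fRew_eq_sum m wt (insert v S)
    rw [he]
    by_cases hvE : v ∈ E
    · rw [← add_sum_erase _ _ hvE]
      have hcard' := card_erase_add_one hvE
      exact le_max_of_le_right (by gcongr; exact sum_le_fRew (subset_insert_iff.1 hE) (by omega))
    · exact le_max_of_le_left (sum_le_fRew ((subset_insert_iff_of_notMem hvE).1 hE) hcard)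
  · refine max_le (fRew_mono (subset_insert v S)) ?_
    obtain ⟨E, hE, hcard, he⟩ := exists_fRew_eq_sum (m - 1) wt S
    rw [he, ← sum_insert fun h => hv (hE h)]
    exact sum_le_fRew (insert_subset_insert v hE) ((card_insert_le v E).trans (by omega))

/-- In an optimal set, `a` can be exchanged for an unused element of `S`. -/
lemma fRew_insert_of_forall_le {a : ℕ} (hmin : ∀ x ∈ S, wt a ≤ wt x) (hm : m ≤ S.card) :
    fRew m wt (insert a S) = fRew m wt S := by
  refine le_antisymm ?_ (fRew_mono (subset_insert a S))
  obtain ⟨E, hE, hcard, he⟩ := exists_fRew_eq_sum m wt (insert a S)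
  rw [he]
  by_cases haE : a ∈ E
  · have hcard' := card_erase_add_one haE
    obtain ⟨u, huS, huE⟩ := exists_mem_notMem_of_card_lt_card (s := E.erase a) (t := S) (by omega)
    calc ∑ x ∈ E, wt x = wt a + ∑ x ∈ E.erase a, wt x := (add_sum_erase _ _ haE).symm
      _ ≤ wt u + ∑ x ∈ E.erase a, wt x := by gcongr; exact hmin u huS
      _ = ∑ x ∈ insert u (E.erase a), wt x := (sum_insert huE).symm
      _ ≤ fRew m wt S := sum_le_fRew (insert_subset huS (subset_insert_iff.1 hE))
          ((card_insert_le _ _).trans (by omega))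
  · exact sum_le_fRew ((subset_insert_iff_of_notMem haE).1 hE) hcard

end Reward

section TopList

variable {m : ℕ} {wt : ℕ → ℝ} {S : Finset ℕ}

lemma length_topList (m : ℕ) (wt : ℕ → ℝ) (S : Finset ℕ) : (topList m wt S).length = m := by
  simp only [topList, List.length_append, List.length_replicate, List.length_drop]
  omega

lemma drop_topList (i : ℕ) : (topList m wt S).drop i = topList (m - i) wt S := by
  rcases le_or_gt i m with him | hmi
  · simp only [topList, List.drop_append, List.drop_replicate, List.length_replicate,
      List.drop_drop]
    congr 2 <;> omega
  · rw [List.drop_eq_nil_of_le (by rw [length_topList]; omega), Nat.sub_eq_zero_of_le hmi.le,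
      List.eq_nil_of_length_eq_zero (length_topList 0 wt S)]

lemma sum_topList_of_card_le (h : S.card ≤ m) : (topList m wt S).sum = ∑ x ∈ S, wt x := by
  have hlen : ((S.val.map wt).sort (· ≤ ·)).length = S.card := by
    rw [Multiset.length_sort, Multiset.card_map]
    rfl
  simp only [topList, hlen, Nat.sub_eq_zero_of_le h, List.drop_zero, List.sum_append,
    List.sum_replicate, smul_zero, zero_add]
  rw [← Multiset.sum_coe, Multiset.sort_eq]
  rfl

lemma topList_insert_of_forall_le {a : ℕ} (ha : a ∉ S) (hmin : ∀ x ∈ S, wt a ≤ wt x)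
    (hm : m ≤ S.card) : topList m wt (insert a S) = topList m wt S := by
  have hsort : ((insert a S).val.map wt).sort (· ≤ ·) = wt a :: (S.val.map wt).sort (· ≤ ·) := by
    rw [insert_val_of_notMem ha, Multiset.map_cons]
    refine Multiset.sort_cons _ _ _ fun b hb => ?_
    obtain ⟨x, hx, rfl⟩ := Multiset.mem_map.1 hb
    exact hmin x hx
  have hlen : ((S.val.map wt).sort (· ≤ ·)).length = S.card := by
    rw [Multiset.length_sort, Multiset.card_map]
    rfl
  simp only [topList, hsort, List.length_cons, hlen]
  rw [Nat.sub_eq_zero_of_le hm, Nat.sub_eq_zero_of_le (by omega),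
    show S.card + 1 - m = S.card - m + 1 by omega, List.drop_succ_cons]

lemma sum_topList (hw : 0 ≤ wt) : (topList m wt S).sum = fRew m wt S := by
  induction S using Finset.induction_on_min_value wt with
  | empty => simp [topList, fRew_empty]
  | insert a S ha hmin ih =>
    by_cases hm : m ≤ S.card
    · rw [topList_insert_of_forall_le ha hmin hm, fRew_insert_of_forall_le hmin hm, ih]
    · have hcard : (insert a S).card ≤ m := by rw [card_insert_of_notMem ha]; omega
      rw [sum_topList_of_card_le hcard, fRew_of_card_le hw hcard]

lemma sum_range_getD_eq_sum_take (l : List ℝ) (i : ℕ) :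
    ∑ j ∈ range i, l.getD j 0 = (l.take i).sum := by
  induction l generalizing i with
  | nil => simp
  | cons a l ih =>
    cases i with
    | zero => simp
    | succ i =>
      simp only [sum_range_succ', List.getD_cons_succ, List.getD_cons_zero, ih,
        List.take_succ_cons, List.sum_cons, add_comm]

lemma sum_range_getD_topList (hw : 0 ≤ wt) (i : ℕ) :
    ∑ j ∈ range i, (topList m wt S).getD j 0 = fRew m wt S - fRew (m - i) wt S := by
  rw [sum_range_getD_eq_sum_take, eq_sub_iff_add_eq, ← sum_topList hw, ← sum_topList hw,
    ← drop_topList, ← List.sum_append, List.take_append_drop]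

end TopList

section Hedge

variable {k : ℕ} {wt : ℕ → ℝ} {V P : Finset ℕ}

noncomputable def hedgeTerm (k : ℕ) (wt : ℕ → ℝ) (V P : Finset ℕ) : ℝ :=
  max (sSup ((fun i => ∑ j ∈ range i,
      ((topList k wt V).getD j 0 - (topList k wt P).getD j 0)) '' Set.Icc 1 k)) 0

lemma hedgeSum_eq_sum_hedgeTerm {U : Type*} [Fintype U] (c : U → ℕ) (w : U → ℕ → ℝ)
    (V P : U → Finset ℕ) : hedgeSum c w V P = ∑ u, hedgeTerm (c u) (w u) (V u) (P u) :=
  rfl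

lemma hedgeTerm_self (k : ℕ) (wt : ℕ → ℝ) (S : Finset ℕ) : hedgeTerm k wt S S = 0 := by
  simp only [hedgeTerm, sub_self, sum_const_zero]
  exact max_eq_right (Real.sSup_le (by rintro _ ⟨_, _, rfl⟩; rfl) le_rfl)

noncomputable def rewardGap (wt : ℕ → ℝ) (V P : Finset ℕ) (m : ℕ) : ℝ :=
  fRew m wt V - fRew m wt P

lemma hedgeTerm_eq (hw : 0 ≤ wt) :
    hedgeTerm k wt V P =
      rewardGap wt V P k - (range (k + 1)).inf' nonempty_range_add_one (rewardGap wt V P) := by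
  set φ := rewardGap wt V P
  have hprefix : ∀ i ∈ Set.Icc 1 k,
      ∑ j ∈ range i, ((topList k wt V).getD j 0 - (topList k wt P).getD j 0) = φ k - φ (k - i) := by
    intro i _
    simp only [φ, rewardGap, sum_sub_distrib, sum_range_getD_topList hw]
    ring
  have hle : ∀ m ≤ k, (range (k + 1)).inf' nonempty_range_add_one φ ≤ φ m :=
    fun m hm => inf'_le _ (mem_range.2 (by omega))
  rw [hedgeTerm, Set.image_congr hprefix]
  apply le_antisymm
  · have h0 : 0 ≤ φ k - (range (k + 1)).inf' nonempty_range_add_one φ := by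
      linarith [hle k le_rfl]
    refine max_le (Real.sSup_le ?_ h0) h0
    rintro _ ⟨i, -, rfl⟩
    linarith [hle (k - i) (Nat.sub_le k i)]
  · obtain ⟨m, hm, hmin⟩ := exists_mem_eq_inf' nonempty_range_add_one φ
    rw [hmin]
    rcases (Nat.lt_succ_iff.1 (mem_range.1 hm)).eq_or_lt with rfl | hlt
    · simp
    · refine le_max_of_le_left (le_csSup ((Set.finite_Icc 1 k).image _).bddAbove
        ⟨k - m, Set.mem_Icc.2 ⟨by omega, by omega⟩, ?_⟩)
      simp only [Nat.sub_sub_self hlt.le]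

/-- By `fRew_insert`, the new gap at `m` is at least the smaller of the old gaps at `m` and
`m - 1`. -/
lemma inf'_rewardGap_le_insert {v : ℕ} (hvV : v ∉ V) (hvP : v ∉ P) :
    (range (k + 1)).inf' nonempty_range_add_one (rewardGap wt V P) ≤
      (range (k + 1)).inf' nonempty_range_add_one (rewardGap wt (insert v V) (insert v P)) := by
  refine le_inf' _ _ fun m hm => ?_
  have hle : ∀ m' ≤ m, (range (k + 1)).inf' nonempty_range_add_one (rewardGap wt V P) ≤
      rewardGap wt V P m' :=
    fun m' hm' => inf'_le _ (mem_range.2 (by have := mem_range.1 hm; omega))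
  rcases Nat.eq_zero_or_pos m with rfl | hm1
  · simpa [rewardGap, fRew_zero] using hle 0 le_rfl
  · have h₁ := hle m le_rfl
    have h₂ := hle (m - 1) (Nat.sub_le m 1)
    simp only [rewardGap, fRew_insert hvV hm1, fRew_insert hvP hm1] at h₁ h₂ ⊢
    rcases max_cases (fRew m wt P) (wt v + fRew (m - 1) wt P) with ⟨h, -⟩ | ⟨h, -⟩ <;> rw [h] <;>
      linarith [le_max_left (fRew m wt V) (wt v + fRew (m - 1) wt V),
        le_max_right (fRew m wt V) (wt v + fRew (m - 1) wt V)]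

lemma hedgeTerm_insert_sub_le (hw : 0 ≤ wt) {v : ℕ} (hvV : v ∉ V) (hvP : v ∉ P) :
    hedgeTerm k wt (insert v V) (insert v P) - hedgeTerm k wt V P ≤
      (fRew k wt (insert v V) - fRew k wt V) - (fRew k wt (insert v P) - fRew k wt P) := by
  rw [hedgeTerm_eq hw, hedgeTerm_eq hw]
  have := inf'_rewardGap_le_insert (k := k) (wt := wt) hvV hvP
  simp only [rewardGap] at this ⊢
  linarith

end Hedge

section Strategy

variable {U : Type*} [DecidableEq U]

lemma Vset_zero (x : ℕ → Option U) (u : U) : Vset x u 0 = ∅ := by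
  simp [Vset]

lemma Vset_succ (x : ℕ → Option U) (u : U) (v : ℕ) :
    Vset x u (v + 1) =
      if x (v + 1) = some u then insert (v + 1) (Vset x u v) else Vset x u v := by
  rw [Vset, ← insert_Icc_right_eq_Icc_add_one (Nat.le_add_left 1 v), filter_insert]
  rfl

lemma Vset_succ_of_eq {x : ℕ → Option U} {u : U} {v : ℕ} (h : x (v + 1) = some u) :
    Vset x u (v + 1) = insert (v + 1) (Vset x u v) := by
  rw [Vset_succ, if_pos h]

lemma Vset_succ_of_ne {x : ℕ → Option U} {u : U} {v : ℕ} (h : x (v + 1) ≠ some u) :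
    Vset x u (v + 1) = Vset x u v := by
  rw [Vset_succ, if_neg h]

lemma succ_notMem_Vset (x : ℕ → Option U) (u : U) (v : ℕ) : v + 1 ∉ Vset x u v := by
  simp [Vset]

variable [Fintype U] (c : U → ℕ) (w : U → ℕ → ℝ)

lemma totalRew_succ (x : ℕ → Option U) (v : ℕ) :
    totalRew c w x (v + 1) = totalRew c w x v + (x (v + 1)).elim 0 fun u =>
      fRew (c u) (w u) (insert (v + 1) (Vset x u v)) - fRew (c u) (w u) (Vset x u v) := by
  simp only [totalRew]
  cases hx : x (v + 1) with
  | none => simp [Vset_succ, hx]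
  | some u₀ =>
    rw [Fintype.sum_eq_add_sum_compl u₀, Fintype.sum_eq_add_sum_compl u₀]
    rw [sum_congr rfl fun u hu => by rw [Vset_succ_of_ne (by simpa [hx, eq_comm] using hu)],
      Vset_succ_of_eq hx, Option.elim]
    ring

lemma hedgeSum_succ_of_eq {x y : ℕ → Option U} {v : ℕ} {u₀ : U} (hx : x (v + 1) = some u₀)
    (hy : y (v + 1) = some u₀) :
    hedgeSum c w (fun u => Vset x u (v + 1)) (fun u => Vset y u (v + 1)) =
      hedgeSum c w (fun u => Vset x u v) (fun u => Vset y u v) +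
        (hedgeTerm (c u₀) (w u₀) (insert (v + 1) (Vset x u₀ v)) (insert (v + 1) (Vset y u₀ v)) -
          hedgeTerm (c u₀) (w u₀) (Vset x u₀ v) (Vset y u₀ v)) := by
  simp only [hedgeSum_eq_sum_hedgeTerm]
  rw [Fintype.sum_eq_add_sum_compl u₀, Fintype.sum_eq_add_sum_compl u₀]
  rw [sum_congr rfl fun u hu => by
      rw [Vset_succ_of_ne (by simpa [hx, eq_comm] using hu),
        Vset_succ_of_ne (by simpa [hy, eq_comm] using hu)],
    Vset_succ_of_eq hx, Vset_succ_of_eq hy]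
  ring

def RobustAt (ρ B : ℝ) (x y : ℕ → Option U) (v : ℕ) : Prop :=
  totalRew c w x v ≥
    ρ * (totalRew c w y v + hedgeSum c w (fun u => Vset x u v) (fun u => Vset y u v)) - B

variable {c w} {ρ B : ℝ}

lemma robustAt_zero (hB : 0 ≤ B) (x y : ℕ → Option U) : RobustAt c w ρ B x y 0 := by
  simp [RobustAt, totalRew, hedgeSum_eq_sum_hedgeTerm, Vset_zero, fRew_empty, hedgeTerm_self, hB]

lemma robustAt_succ_of_fdCond {xπ : ℕ → U} {x xt : ℕ → Option U} {v : ℕ}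
    (hx : x (v + 1) = xt (v + 1)) (h : fdCond c w ρ B xπ x xt (v + 1)) :
    RobustAt c w ρ B x (fun v' => some (xπ v')) (v + 1) := by
  simp only [fdCond, Nat.add_sub_cancel, ← hx, ← Vset_succ] at h
  rwa [RobustAt, totalRew_succ]

lemma robustAt_succ_of_eq (hw : ∀ u, 0 ≤ w u) (hρ₀ : 0 ≤ ρ) (hρ₁ : ρ ≤ 1)
    {x y : ℕ → Option U} {v : ℕ} {u₀ : U} (hx : x (v + 1) = some u₀) (hy : y (v + 1) = some u₀)
    (h : RobustAt c w ρ B x y v) : RobustAt c w ρ B x y (v + 1) := by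
  rw [RobustAt, totalRew_succ, totalRew_succ, hx, hy, hedgeSum_succ_of_eq c w hx hy]
  simp only [Option.elim]
  have hhedge := hedgeTerm_insert_sub_le (k := c u₀) (hw u₀)
    (succ_notMem_Vset x u₀ v) (succ_notMem_Vset y u₀ v)
  have hgain : 0 ≤ fRew (c u₀) (w u₀) (insert (v + 1) (Vset x u₀ v)) -
      fRew (c u₀) (w u₀) (Vset x u₀ v) :=
    sub_nonneg.2 (fRew_mono (subset_insert (v + 1) (Vset x u₀ v)))
  unfold RobustAt at h
  linarith [mul_le_mul_of_nonneg_left hhedge hρ₀, mul_le_of_le_one_left hgain hρ₁]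

end Strategy

theorem lomar_free_disposal_invariant_general
    {U : Type*} [Fintype U] [DecidableEq U]
    (c : U → ℕ) (T : ℕ) (w : U → ℕ → ℝ)
    (hw : ∀ u v, 0 ≤ w u v)
    (ρ B : ℝ) (hρ₀ : 0 ≤ ρ) (hρ₁ : ρ ≤ 1) (hB : 0 ≤ B)
    (xπ : ℕ → U) (xt x : ℕ → Option U)
    (hfollow : ∀ v, 1 ≤ v → v ≤ T → fdCond c w ρ B xπ x xt v → x v = xt v)
    (hexpert : ∀ v, 1 ≤ v → v ≤ T → ¬ fdCond c w ρ B xπ x xt v → x v = some (xπ v)) :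
    ∀ v ≤ T, totalRew c w x v ≥
      ρ * (totalRew c w (fun v' => some (xπ v')) v +
        hedgeSum c w (fun u => Vset x u v) (fun u => Vset (fun v' => some (xπ v')) u v))
      - B := by
  intro v
  induction v with
  | zero => exact fun _ => robustAt_zero hB x _
  | succ v ih =>
    intro hv
    by_cases h : fdCond c w ρ B xπ x xt (v + 1)
    · exact robustAt_succ_of_fdCond (hfollow _ (by omega) hv h) h
    · exact robustAt_succ_of_eq (hw ·) hρ₀ hρ₁ (hexpert _ (by omega) hv h) rfl
        (ih (by omega))

/-- **Robustness invariant of LOMAR in the free-disposal setting.**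
For every `ρ ∈ [0,1]`, `B ≥ 0`, every expert strategy `x^π` (with `x^π_v ∈ U` for
each `v`), and every sequence of RL suggestions `x̃_v ∈ U ∪ {skip}`, the strategy `x`
produced by LOMAR's free-disposal switching rule satisfies, at every step
`v ∈ {0, 1, …, T}`, the invariant
`R_v ≥ ρ·( R^π_v + G̃((V_{u,v})_u, (V^π_{u,v})_u) ) − B`. -/
theorem lomar_free_disposal_invariant
    {U : Type*} [Fintype U] [DecidableEq U]
    (c : U → ℕ) (hc : ∀ u, 1 ≤ c u) (T : ℕ) (w : U → ℕ → ℝ)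
    (hw : ∀ u v, 0 ≤ w u v)
    (ρ B : ℝ) (hρ₀ : 0 ≤ ρ) (hρ₁ : ρ ≤ 1) (hB : 0 ≤ B)
    (xπ : ℕ → U) (xt x : ℕ → Option U)
    (hfollow : ∀ v, 1 ≤ v → v ≤ T → fdCond c w ρ B xπ x xt v → x v = xt v)
    (hexpert : ∀ v, 1 ≤ v → v ≤ T → ¬ fdCond c w ρ B xπ x xt v → x v = some (xπ v)) :
    ∀ v ≤ T, totalRew c w x v ≥
      ρ * (totalRew c w (fun v' => some (xπ v')) v +
        hedgeSum c w (fun u => Vset x u v) (fun u => Vset (fun v' => some (xπ v')) u v))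
      - B :=
  lomar_free_disposal_invariant_general c T w hw ρ B hρ₀ hρ₁ hB xπ xt x hfollow hexpert
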